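/- If every brick in mod A is isomorphic to a simple A-module, then tors A is a finite set; in fact tors A has exactly 2^n elements, where n is the number of isomorphism classes of simple A-modules. -/

import Mathlib

/-! Preamble: the category `mod A` of finite-dimensional right `A`-modules,
torsion(-free) classes, the complete lattice `tors A`, functorially finite
torsion classes, bricks, etc. -/

open Function

/-- A bundled finite-dimensional (i.e. finitely generated) right `A`-module,
realized as a left module over `Aᵐᵒᵖ`. -/
structure ModA (A : Type) [Ring A] : Type 1 where
  carrier : Type
  [isAddCommGroup : AddCommGroup carrier]
  [isModule : Module Aᵐᵒᵖ carrier]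
  [isFinite : Module.Finite Aᵐᵒᵖ carrier]

attribute [instance] ModA.isAddCommGroup ModA.isModule ModA.isFinite

namespace ModA

variable {A : Type} [Ring A]

instance : CoeSort (ModA A) Type := ⟨ModA.carrier⟩

end ModA

section TorsionTheory

variable {A : Type} [Ring A]

/-- A torsion class: a class of finite-dimensional right `A`-modules containing the
zero modules, closed under quotient modules and under extensions. -/
def IsTorsionClass (T : Set (ModA A)) : Prop :=
  (∀ N : ModA A, Subsingleton N.carrier → N ∈ T) ∧
  (∀ M N : ModA A, M ∈ T → ∀ f : M.carrier →ₗ[Aᵐᵒᵖ] N.carrier, Surjective f → N ∈ T) ∧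
  (∀ (X Y Z : ModA A) (f : X.carrier →ₗ[Aᵐᵒᵖ] Y.carrier) (g : Y.carrier →ₗ[Aᵐᵒᵖ] Z.carrier),
    Injective f → Surjective g → LinearMap.range f = LinearMap.ker g →
    X ∈ T → Z ∈ T → Y ∈ T)

/-- A torsion-free class: a class of finite-dimensional right `A`-modules containing the
zero modules, closed under submodules and under extensions. -/
def IsTorsionFreeClass (F : Set (ModA A)) : Prop :=
  (∀ N : ModA A, Subsingleton N.carrier → N ∈ F) ∧
  (∀ M N : ModA A, M ∈ F → ∀ f : N.carrier →ₗ[Aᵐᵒᵖ] M.carrier, Injective f → N ∈ F) ∧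
  (∀ (X Y Z : ModA A) (f : X.carrier →ₗ[Aᵐᵒᵖ] Y.carrier) (g : Y.carrier →ₗ[Aᵐᵒᵖ] Z.carrier),
    Injective f → Surjective g → LinearMap.range f = LinearMap.ker g →
    X ∈ F → Z ∈ F → Y ∈ F)

theorem isTorsionClass_sInter {S : Set (Set (ModA A))} (h : ∀ T ∈ S, IsTorsionClass T) :
    IsTorsionClass (⋂₀ S) := by
  refine ⟨fun N hN => ?_, fun M N hM f hf => ?_, fun X Y Z f g hf hg he hX hZ => ?_⟩
  · exact Set.mem_sInter.2 fun T hT => (h T hT).1 N hN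
  · exact Set.mem_sInter.2 fun T hT => (h T hT).2.1 M N (Set.mem_sInter.1 hM T hT) f hf
  · exact Set.mem_sInter.2 fun T hT =>
      (h T hT).2.2 X Y Z f g hf hg he (Set.mem_sInter.1 hX T hT) (Set.mem_sInter.1 hZ T hT)

theorem isTorsionFreeClass_sInter {S : Set (Set (ModA A))} (h : ∀ F ∈ S, IsTorsionFreeClass F) :
    IsTorsionFreeClass (⋂₀ S) := by
  refine ⟨fun N hN => ?_, fun M N hM f hf => ?_, fun X Y Z f g hf hg he hX hZ => ?_⟩
  · exact Set.mem_sInter.2 fun T hT => (h T hT).1 N hN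
  · exact Set.mem_sInter.2 fun T hT => (h T hT).2.1 M N (Set.mem_sInter.1 hM T hT) f hf
  · exact Set.mem_sInter.2 fun T hT =>
      (h T hT).2.2 X Y Z f g hf hg he (Set.mem_sInter.1 hX T hT) (Set.mem_sInter.1 hZ T hT)

end TorsionTheory

/-- `tors A`: the poset of all torsion classes in `mod A`, ordered by inclusion. -/
def Tors (A : Type) [Ring A] : Type 1 := {T : Set (ModA A) // IsTorsionClass T}

/-- `torf A`: the poset of all torsion-free classes in `mod A`, ordered by inclusion. -/
def Torf (A : Type) [Ring A] : Type 1 := {F : Set (ModA A) // IsTorsionFreeClass F}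

namespace Tors

variable {A : Type} [Ring A]

instance : PartialOrder (Tors A) := Subtype.partialOrder _

instance : InfSet (Tors A) :=
  ⟨fun S => ⟨⋂₀ (Subtype.val '' S),
    isTorsionClass_sInter (by rintro _ ⟨T, _, rfl⟩; exact T.2)⟩⟩

/-- `tors A` is a complete lattice, with meets given by intersections. -/
instance : CompleteLattice (Tors A) :=
  completeLatticeOfInf _ (fun S =>
    ⟨fun T hT => Set.sInter_subset_of_mem ⟨T, hT, rfl⟩,
     fun L hL => Set.subset_sInter (by rintro _ ⟨T, hT, rfl⟩; exact hL hT)⟩)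

end Tors

namespace Torf

variable {A : Type} [Ring A]

instance : PartialOrder (Torf A) := Subtype.partialOrder _

instance : InfSet (Torf A) :=
  ⟨fun S => ⟨⋂₀ (Subtype.val '' S),
    isTorsionFreeClass_sInter (by rintro _ ⟨T, _, rfl⟩; exact T.2)⟩⟩

/-- `torf A` is a complete lattice, with meets given by intersections. -/
instance : CompleteLattice (Torf A) :=
  completeLatticeOfInf _ (fun S =>
    ⟨fun T hT => Set.sInter_subset_of_mem ⟨T, hT, rfl⟩,
     fun L hL => Set.subset_sInter (by rintro _ ⟨T, hT, rfl⟩; exact hL hT)⟩)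

end Torf

section Defs

variable {A : Type} [Ring A]

/-- `T(C)`: the smallest torsion class containing the class `C` of modules. -/
def torsGen (C : Set (ModA A)) : Tors A := sInf {T : Tors A | C ⊆ T.1}

/-- `Fac M`: the class of all quotients of finite direct sums of copies of `M`. -/
def Fac (M : ModA A) : Set (ModA A) :=
  {N | ∃ (k : ℕ) (f : (Fin k → M.carrier) →ₗ[Aᵐᵒᵖ] N.carrier), Surjective f}

/-- A class of modules is functorially finite (as a torsion class) when it is
of the form `Fac M`. -/
def IsFFSet (X : Set (ModA A)) : Prop := ∃ M : ModA A, X = Fac M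

/-- A torsion class is functorially finite when it is of the form `Fac M`. -/
def IsFunctoriallyFinite (T : Tors A) : Prop := IsFFSet T.1

/-- The right Hom-orthogonal class `X^⊥`. -/
def rightPerp (X : Set (ModA A)) : Set (ModA A) :=
  {M | ∀ N ∈ X, ∀ f : N.carrier →ₗ[Aᵐᵒᵖ] M.carrier, f = 0}

/-- The left Hom-orthogonal class `^⊥X`. -/
def leftPerp (X : Set (ModA A)) : Set (ModA A) :=
  {N | ∀ M ∈ X, ∀ f : N.carrier →ₗ[Aᵐᵒᵖ] M.carrier, f = 0}

/-- A brick: a nonzero module all of whose nonzero endomorphisms are isomorphisms. -/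
def IsBrick (B : ModA A) : Prop :=
  Nontrivial B.carrier ∧
    ∀ f : B.carrier →ₗ[Aᵐᵒᵖ] B.carrier, f ≠ 0 → Bijective f

end Defs

/-- `f-tors A`: the poset of functorially finite torsion classes, ordered by inclusion. -/
def FTors (A : Type) [Ring A] : Type 1 := {T : Tors A // IsFunctoriallyFinite T}

instance {A : Type} [Ring A] : PartialOrder (FTors A) := Subtype.partialOrder _

section Simples

variable (A : Type) [Ring A]

/-- The type of simple objects of `mod A`. -/
def SimpleMod : Type 1 := {S : ModA A // IsSimpleModule Aᵐᵒᵖ S.carrier}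

/-- Isomorphism of simple modules, as an equivalence relation. -/
def simpleIsoSetoid : Setoid (SimpleMod A) where
  r S T := Nonempty (S.1.carrier ≃ₗ[Aᵐᵒᵖ] T.1.carrier)
  iseqv := ⟨fun _ => ⟨LinearEquiv.refl _ _⟩, fun ⟨e⟩ => ⟨e.symm⟩, fun ⟨e⟩ ⟨f⟩ => ⟨e.trans f⟩⟩

/-- The number of isomorphism classes of simple right `A`-modules. -/
noncomputable def numSimples : ℕ := Nat.card (Quotient (simpleIsoSetoid A))

end Simples

section Lattice

/-- Upper semimodularity: if `a` and `b` both cover `a ⊓ b`, then `a ⊔ b` covers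
both `a` and `b`. -/
def UpperSemimodular (α : Type*) [Lattice α] : Prop :=
  ∀ a b : α, a ⊓ b ⋖ a → a ⊓ b ⋖ b → a ⋖ a ⊔ b ∧ b ⋖ a ⊔ b

/-- Lower semimodularity: if `a ⊔ b` covers both `a` and `b`, then `a` and `b` both
cover `a ⊓ b`. -/
def LowerSemimodular (α : Type*) [Lattice α] : Prop :=
  ∀ a b : α, a ⋖ a ⊔ b → b ⋖ a ⊔ b → a ⊓ b ⋖ a ∧ a ⊓ b ⋖ b

/-- An element `x` of a complete lattice is completely join irreducible if the join of
all elements strictly below `x` is strictly below `x`. -/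
def CompletelyJoinIrred {α : Type*} [CompleteLattice α] (x : α) : Prop :=
  sSup {y | y < x} < x

end Lattice

/-- The statement that the poset `f-tors A` forms a lattice: any two functorially finite
torsion classes have a least upper bound and a greatest lower bound within `f-tors A`. -/
def FTorsIsLattice (A : Type) [Ring A] : Prop :=
  ∀ a b : FTors A, (∃ m, IsGLB {a, b} m) ∧ (∃ j, IsLUB {a, b} j)

/-- Upper semimodularity for the poset `f-tors A`. -/
def FTorsUpperSemimodular (A : Type) [Ring A] : Prop :=
  ∀ a b m j : FTors A, IsGLB {a, b} m → IsLUB {a, b} j →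
    m ⋖ a → m ⋖ b → a ⋖ j ∧ b ⋖ j

/-- Lower semimodularity for the poset `f-tors A`. -/
def FTorsLowerSemimodular (A : Type) [Ring A] : Prop :=
  ∀ a b m j : FTors A, IsGLB {a, b} m → IsLUB {a, b} j →
    a ⋖ j → b ⋖ j → m ⋖ a ∧ m ⋖ b

/-- A realization of a `K`-algebra `A` as a finite product of finite-dimensional
local `K`-algebras. -/
structure LocalAlgebraFactorization (K : Type) [Field K] (A : Type) [Ring A] [Algebra K A] where
  m : ℕ
  B : Fin m → Type
  [ringB : ∀ i, Ring (B i)]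
  [algB : ∀ i, Algebra K (B i)]
  finB : ∀ i, FiniteDimensional K (B i)
  localB : ∀ i, IsLocalRing (B i)
  equiv : A ≃ₐ[K] ∀ i, B i

/-- An indecomposable module: nonzero, and not the internal direct sum of two nonzero
submodules. -/
def IsIndecomposableModule (R M : Type*) [Ring R] [AddCommGroup M] [Module R M] : Prop :=
  Nontrivial M ∧ ∀ S T : Submodule R M, IsCompl S T → S = ⊥ ∨ T = ⊥

/-! A torsion class `T` is sent to the set of isomorphism classes of simple modules it contains,
and a set `Q` of such classes to the class of modules all of whose simple quotients lie in `Q`,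
which is always a torsion class. These maps are inverse once a module `M` all of whose simple
quotients lie in `T` is shown to lie in `T`. Inducting on length along a maximal submodule
`W ⊂ M`, it suffices that every simple quotient of `W` is isomorphic to `M ⧸ W` or is a simple
quotient of `M`; otherwise the two simple modules would form a non-split extension with
non-isomorphic ends, which is a brick that is not simple. -/

theorem IsAtom.eq_bot_or_eq_or_eq_top_of_isCoatom {α : Type*} [Lattice α] [BoundedOrder α]
    {a : α} (ha : IsAtom a) (ha' : IsCoatom a) (hc : ¬ IsComplemented a) (b : α) :
    b = ⊥ ∨ b = a ∨ b = ⊤ := by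
  rcases ha.le_iff.mp (inf_le_left : a ⊓ b ≤ a) with hi | hi <;>
    rcases ha'.le_iff.mp (le_sup_left : a ≤ a ⊔ b) with hs | hs
  · exact absurd ⟨b, disjoint_iff.mpr hi, codisjoint_iff.mpr hs⟩ hc
  · exact Or.inl (by rwa [inf_eq_right.mpr (sup_eq_left.mp hs)] at hi)
  · exact Or.inr (Or.inr (by rwa [sup_eq_right.mpr (inf_eq_left.mp hi)] at hs))
  · exact Or.inr (Or.inl (le_antisymm (sup_eq_left.mp hs) (inf_eq_left.mp hi)))

section Modules

open LinearMap

variable {R M : Type*} [Ring R] [AddCommGroup M] [Module R M]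

theorem bijective_of_forall_eq_bot_or_eq_or_eq_top {U : Submodule R M} (hU : IsAtom U)
    (hU' : IsCoatom U) (hsub : ∀ W : Submodule R M, W = ⊥ ∨ W = U ∨ W = ⊤)
    (hniso : IsEmpty (U ≃ₗ[R] M ⧸ U)) {f : M →ₗ[R] M} (hf : f ≠ 0) : Bijective f := by
  have : IsSimpleModule R U := isSimpleModule_iff_isAtom.mpr hU
  have : IsSimpleModule R (M ⧸ U) := isSimpleModule_iff_isCoatom.mpr hU'
  have hM : ¬ IsSimpleModule R M := fun _ => (eq_bot_or_eq_top U).elim hU.1 hU'.1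
  rcases hsub (ker f) with hk | hk | hk <;> [rcases hsub (range f) with hr | hr | hr;
    rcases hsub (range f) with hr | hr | hr; exact absurd (ker_eq_top.mp hk) hf]
  · exact absurd (range_eq_bot.mp hr) hf
  · exact absurd (IsSimpleModule.congr
      ((LinearEquiv.ofInjective f (ker_eq_bot.mp hk)).trans (LinearEquiv.ofEq _ _ hr))) hM
  · exact ⟨ker_eq_bot.mp hk, range_eq_top.mp hr⟩
  · exact absurd (range_eq_bot.mp hr) hf
  · exact hniso.elim ((LinearEquiv.ofEq _ _ hr.symm).trans
      ((Submodule.quotEquivOfEq _ _ hk.symm).trans f.quotKerEquivRange).symm)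
  · exact absurd (IsSimpleModule.congr ((LinearEquiv.ofTop _ hr).symm.trans
      (f.quotKerEquivRange.symm.trans (Submodule.quotEquivOfEq _ _ hk)))) hM

theorem CompositionSeries.exists_linearEquiv_of_surjective (c : CompositionSeries (Submodule R M))
    (hc₀ : c.head = ⊥) (hc : c.last = ⊤) {S : Type*} [AddCommGroup S] [Module R S]
    [IsSimpleModule R S] {f : M →ₗ[R] S} (hf : Surjective f) :
    ∃ i : Fin c.length,
      Nonempty ((c i.succ ⧸ (c i.castSucc).comap (c i.succ).subtype) ≃ₗ[R] S) := by
  have : Nontrivial S := IsSimpleModule.nontrivial R S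
  obtain ⟨i, hi, hi'⟩ : ∃ i : Fin c.length, c i.castSucc ≤ ker f ∧ ¬ c i.succ ≤ ker f := by
    by_contra! h
    have hlast := Fin.induction (motive := fun j => c j ≤ ker f)
      (le_of_eq_of_le hc₀ bot_le) h (Fin.last _)
    exact ne_zero_of_surjective hf (ker_eq_top.mp (top_le_iff.mp (le_of_eq_of_le hc.symm hlast)))
  have hsimple : IsSimpleModule R (c i.succ ⧸ (c i.castSucc).comap (c i.succ).subtype) :=
    (covBy_iff_quot_is_simple (c.step i).le).mp (c.step i)
  set g := f ∘ₗ (c i.succ).subtype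
  have hle : (c i.castSucc).comap (c i.succ).subtype ≤ ker g := fun x hx => hi hx
  have hg : ((c i.castSucc).comap (c i.succ).subtype).liftQ g hle ≠ 0 := fun h0 =>
    hi' fun x hx => by simpa [g] using congr($h0 (Submodule.Quotient.mk ⟨x, hx⟩))
  exact ⟨i, ⟨.ofBijective _ (bijective_of_ne_zero hg)⟩⟩

end Modules

section Bricks

open LinearMap

variable {A : Type} [Ring A]

theorem isComplemented_of_isAtom_of_isCoatom
    (hb : ∀ B : ModA A, IsBrick B → IsSimpleModule Aᵐᵒᵖ B.carrier) (M : ModA A)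
    {U : Submodule Aᵐᵒᵖ M.carrier} (hU : IsAtom U) (hU' : IsCoatom U)
    (hniso : IsEmpty (U ≃ₗ[Aᵐᵒᵖ] M.carrier ⧸ U)) : IsComplemented U := by
  by_contra hc
  have hsub := hU.eq_bot_or_eq_or_eq_top_of_isCoatom hU' hc
  have : Nontrivial M.carrier := (Submodule.nontrivial_iff Aᵐᵒᵖ).mp ⟨U, ⊤, hU'.1⟩
  have := hb M ⟨this, fun f hf => bijective_of_forall_eq_bot_or_eq_or_eq_top hU hU' hsub hniso hf⟩
  exact (eq_bot_or_eq_top U).elim hU.1 hU'.1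

/-- The extension `0 → S → M ⧸ K → M ⧸ W → 0`, with `K` the kernel of `g`, splits: otherwise
`M ⧸ K` would be a brick that is not simple. -/
theorem exists_surjective_of_isCoatom
    (hb : ∀ B : ModA A, IsBrick B → IsSimpleModule Aᵐᵒᵖ B.carrier) (M : ModA A)
    {W : Submodule Aᵐᵒᵖ M.carrier} (hW : IsCoatom W) {S : Type*} [AddCommGroup S]
    [Module Aᵐᵒᵖ S] [IsSimpleModule Aᵐᵒᵖ S] {g : W →ₗ[Aᵐᵒᵖ] S} (hg : Surjective g)
    (hniso : IsEmpty (S ≃ₗ[Aᵐᵒᵖ] M.carrier ⧸ W)) :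
    ∃ f : M.carrier →ₗ[Aᵐᵒᵖ] S, Surjective f := by
  set K := (ker g).map W.subtype
  set h := K.mkQ ∘ₗ W.subtype
  have hker : ker h = ker g := by
    rw [ker_comp, Submodule.ker_mkQ, Submodule.comap_map_eq_of_injective W.injective_subtype]
  have hrange : range h = W.map K.mkQ := by rw [range_comp, Submodule.range_subtype]
  let eU : range h ≃ₗ[Aᵐᵒᵖ] S := h.quotKerEquivRange.symm.trans
    ((Submodule.quotEquivOfEq _ _ hker).trans (g.quotKerEquivOfSurjective hg))
  let eQ : ((M.carrier ⧸ K) ⧸ range h) ≃ₗ[Aᵐᵒᵖ] M.carrier ⧸ W :=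
    (Submodule.quotEquivOfEq _ _ hrange).trans
      (Submodule.quotientQuotientEquivQuotient K W (Submodule.map_subtype_le W _))
  have : IsSimpleModule Aᵐᵒᵖ (M.carrier ⧸ W) := isSimpleModule_iff_isCoatom.mpr hW
  have hU : IsAtom (range h) := isSimpleModule_iff_isAtom.mp (IsSimpleModule.congr eU)
  have hU' : IsCoatom (range h) := isSimpleModule_iff_isCoatom.mp (IsSimpleModule.congr eQ)
  obtain ⟨V, hV⟩ := isComplemented_of_isAtom_of_isCoatom hb ⟨M.carrier ⧸ K⟩ hU hU'
    ⟨fun e => hniso.elim (eU.symm.trans (e.trans eQ))⟩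
  exact ⟨eU ∘ₗ (range h).projectionOnto V hV ∘ₗ K.mkQ,
    eU.surjective.comp ((Submodule.projectionOnto_surjective hV).comp K.mkQ_surjective)⟩

end Bricks

section SimpleClasses

open LinearMap

variable {A : Type} [Ring A]

def ofSimpleClasses (Q : Set (Quotient (simpleIsoSetoid A))) : Set (ModA A) :=
  {M | ∀ (S : SimpleMod A) (f : M.carrier →ₗ[Aᵐᵒᵖ] S.1.carrier), Surjective f →
    Quotient.mk _ S ∈ Q}

def simpleClasses (T : Set (ModA A)) : Set (Quotient (simpleIsoSetoid A)) :=
  Quotient.mk _ '' {S | S.1 ∈ T}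

theorem IsTorsionClass.mem_of_linearEquiv {T : Set (ModA A)} (hT : IsTorsionClass T)
    {M N : ModA A} (hM : M ∈ T) (e : M.carrier ≃ₗ[Aᵐᵒᵖ] N.carrier) : N ∈ T :=
  hT.2.1 M N hM e.toLinearMap e.surjective

theorem IsTorsionClass.mem_of_mk_mem_simpleClasses {T : Set (ModA A)} (hT : IsTorsionClass T)
    {S : SimpleMod A} (hS : Quotient.mk _ S ∈ simpleClasses T) : S.1 ∈ T := by
  obtain ⟨S', hS', he⟩ := hS
  exact hT.mem_of_linearEquiv hS' (Quotient.exact he).some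

theorem IsTorsionClass.mem_of_submodule_of_quotient [IsNoetherianRing Aᵐᵒᵖ] {T : Set (ModA A)}
    (hT : IsTorsionClass T) {M : ModA A} {W : Submodule Aᵐᵒᵖ M.carrier} (hW : ⟨W⟩ ∈ T)
    (hQ : ⟨M.carrier ⧸ W⟩ ∈ T) : M ∈ T :=
  hT.2.2 ⟨W⟩ M ⟨M.carrier ⧸ W⟩ W.subtype W.mkQ W.injective_subtype W.mkQ_surjective
    (by rw [Submodule.range_subtype, Submodule.ker_mkQ]) hW hQ

/-- For extension closure: a surjection from the middle term onto a simple module is either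
surjective on the submodule, or vanishes on it and factors through the quotient. -/
theorem isTorsionClass_ofSimpleClasses (Q : Set (Quotient (simpleIsoSetoid A))) :
    IsTorsionClass (ofSimpleClasses Q) := by
  refine ⟨fun N hN S f hf => ?_, fun M N hM f hf S g hg => hM S (g ∘ₗ f) (hg.comp hf),
    fun X Y Z f g hf hg he hX hZ S h hh => ?_⟩
  · have := S.2.nontrivial
    exact absurd hN (not_subsingleton_iff_nontrivial.mpr hf.nontrivial)
  · have := S.2
    rcases (h ∘ₗ f).surjective_or_eq_zero with hhf | hhf
    · exact hX S _ hhf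
    · have hle : ker g ≤ ker h := by
        rw [← he]
        rintro _ ⟨x, rfl⟩
        exact congr($hhf x)
      refine hZ S ((ker g).liftQ h hle ∘ₗ (g.quotKerEquivOfSurjective hg).symm.toLinearMap) ?_
      intro s
      obtain ⟨y, rfl⟩ := hh s
      exact ⟨g y, by simp [quotKerEquivOfSurjective_symm_apply]⟩

theorem simpleClasses_ofSimpleClasses (Q : Set (Quotient (simpleIsoSetoid A))) :
    simpleClasses (ofSimpleClasses Q) = Q := by
  ext q
  refine ⟨fun ⟨S, hS, he⟩ => he ▸ hS S LinearMap.id surjective_id, fun hq => ⟨q.out, ?_, q.out_eq⟩⟩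
  intro S f hf
  have := q.out.2
  have := S.2
  have := IsSimpleModule.nontrivial Aᵐᵒᵖ S.1.carrier
  have e := LinearEquiv.ofBijective f (bijective_of_ne_zero (ne_zero_of_surjective hf))
  rwa [Quotient.sound (s := simpleIsoSetoid A) (b := q.out) ⟨e.symm⟩, q.out_eq]

end SimpleClasses

section Classification

variable {A : Type} [Ring A]

theorem mem_ofSimpleClasses_of_isCoatom [IsNoetherianRing Aᵐᵒᵖ]
    (hb : ∀ B : ModA A, IsBrick B → IsSimpleModule Aᵐᵒᵖ B.carrier)
    {Q : Set (Quotient (simpleIsoSetoid A))} {M : ModA A} (hM : M ∈ ofSimpleClasses Q)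
    {W : Submodule Aᵐᵒᵖ M.carrier} (hW : IsCoatom W) : ⟨W⟩ ∈ ofSimpleClasses Q := by
  intro S g hg
  have := S.2
  have hQ : IsSimpleModule Aᵐᵒᵖ (M.carrier ⧸ W) := isSimpleModule_iff_isCoatom.mpr hW
  by_cases hiso : Nonempty (S.1.carrier ≃ₗ[Aᵐᵒᵖ] M.carrier ⧸ W)
  · rw [Quotient.sound (s := simpleIsoSetoid A) (b := ⟨⟨M.carrier ⧸ W⟩, hQ⟩) hiso]
    exact hM _ W.mkQ W.mkQ_surjective
  · obtain ⟨f, hf⟩ := exists_surjective_of_isCoatom hb M hW hg (not_nonempty_iff.mp hiso)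
    exact hM S f hf

theorem ofSimpleClasses_simpleClasses [IsArtinianRing Aᵐᵒᵖ]
    (hb : ∀ B : ModA A, IsBrick B → IsSimpleModule Aᵐᵒᵖ B.carrier)
    {T : Set (ModA A)} (hT : IsTorsionClass T) : ofSimpleClasses (simpleClasses T) = T := by
  refine Set.Subset.antisymm (fun M hM => ?_) fun M hM S f hf => ⟨S, hT.2.1 M S.1 hM f hf, rfl⟩
  induction M using (InvImage.wf (fun M : ModA A => Module.length Aᵐᵒᵖ M.carrier)
    wellFounded_lt).induction with
  | _ M ih =>
  rcases subsingleton_or_nontrivial M.carrier with h | h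
  · exact hT.1 M h
  obtain ⟨W, hW⟩ := IsCoatomic.exists_coatom (Submodule Aᵐᵒᵖ M.carrier)
  have hQ : IsSimpleModule Aᵐᵒᵖ (M.carrier ⧸ W) := isSimpleModule_iff_isCoatom.mpr hW
  exact hT.mem_of_submodule_of_quotient
    (ih ⟨W⟩ (Submodule.length_lt hW.1) (mem_ofSimpleClasses_of_isCoatom hb hM hW))
    (hT.mem_of_mk_mem_simpleClasses (S := ⟨⟨M.carrier ⧸ W⟩, hQ⟩) (hM _ W.mkQ W.mkQ_surjective))

def torsEquivSetSimpleClasses [IsArtinianRing Aᵐᵒᵖ]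
    (hb : ∀ B : ModA A, IsBrick B → IsSimpleModule Aᵐᵒᵖ B.carrier) :
    Tors A ≃ Set (Quotient (simpleIsoSetoid A)) where
  toFun T := simpleClasses T.1
  invFun Q := ⟨ofSimpleClasses Q, isTorsionClass_ofSimpleClasses Q⟩
  left_inv T := Subtype.ext (ofSimpleClasses_simpleClasses hb T.2)
  right_inv := simpleClasses_ofSimpleClasses

/-- Every simple module is a quotient of the regular module, hence isomorphic to one of its
composition factors. -/
theorem finite_quotient_simpleIsoSetoid [IsArtinianRing Aᵐᵒᵖ] :
    Finite (Quotient (simpleIsoSetoid A)) := by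
  obtain ⟨c, hc₀, hc⟩ := exists_compositionSeries_of_isNoetherian_isArtinian Aᵐᵒᵖ Aᵐᵒᵖ
  have hfactor (S : SimpleMod A) : ∃ i : Fin c.length,
      Nonempty ((c i.succ ⧸ (c i.castSucc).comap (c i.succ).subtype) ≃ₗ[Aᵐᵒᵖ] S.1.carrier) := by
    have := S.2
    have := IsSimpleModule.nontrivial Aᵐᵒᵖ S.1.carrier
    obtain ⟨s, hs⟩ := exists_ne (0 : S.1.carrier)
    exact c.exists_linearEquiv_of_surjective hc₀ hc
      (IsSimpleModule.toSpanSingleton_surjective _ hs)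
  choose idx hidx using hfactor
  refine Finite.of_injective (fun q => idx q.out) fun q q' (h : idx q.out = idx q'.out) => ?_
  obtain ⟨e⟩ := hidx q.out
  obtain ⟨e'⟩ := h ▸ hidx q'.out
  rw [← q.out_eq, ← q'.out_eq]
  exact Quotient.sound (s := simpleIsoSetoid A) ⟨e.symm.trans e'⟩

end Classification

theorem stmt17_general (K A : Type) [Field K] [Ring A] [Algebra K A]
    [FiniteDimensional K A]
    (hb : ∀ B : ModA A, IsBrick B →
      ∃ S : ModA A, IsSimpleModule Aᵐᵒᵖ S.carrier ∧ Nonempty (B.carrier ≃ₗ[Aᵐᵒᵖ] S.carrier)) :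
    Finite (Tors A) ∧ Nat.card (Tors A) = 2 ^ numSimples A := by
  have : IsArtinianRing Aᵐᵒᵖ := .of_finite K Aᵐᵒᵖ
  have := finite_quotient_simpleIsoSetoid (A := A)
  have : Fintype (Quotient (simpleIsoSetoid A)) := Fintype.ofFinite _
  let e := torsEquivSetSimpleClasses fun B hB =>
    let ⟨_, _, ⟨e⟩⟩ := hb B hB
    IsSimpleModule.congr e
  refine ⟨.of_equiv _ e.symm, ?_⟩
  classical
  rw [Nat.card_congr e, Nat.card_eq_fintype_card, Fintype.card_set, numSimples,
    Nat.card_eq_fintype_card]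

/-- if every brick in `mod A` is isomorphic to a simple `A`-module, then
`tors A` is finite, of cardinality `2 ^ n` where `n` is the number of isomorphism
classes of simple `A`-modules. -/
theorem stmt17 (K A : Type) [Field K] [IsAlgClosed K] [Ring A] [Algebra K A]
    [FiniteDimensional K A]
    (hb : ∀ B : ModA A, IsBrick B →
      ∃ S : ModA A, IsSimpleModule Aᵐᵒᵖ S.carrier ∧ Nonempty (B.carrier ≃ₗ[Aᵐᵒᵖ] S.carrier)) :
    Finite (Tors A) ∧ Nat.card (Tors A) = 2 ^ numSimples A :=
  stmt17_general K A hb
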